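/- Let A be a finite set and let X ⊆ A^ℤ be a strongly irreducible subshift. Then the set of periodic configurations in X is dense in X. -/

import Mathlib

/-- The shift action of `ℤ` on configurations `x : ℤ → A`: `(n • x)(m) = x(m - n)`. -/
def shiftZ {A : Type*} (n : ℤ) (x : ℤ → A) : ℤ → A :=
  fun m => x (m - n)

/-- A subshift is a closed, shift-invariant subset of `A^ℤ` (with the prodiscrete
topology). -/
def IsSubshiftZ {A : Type*} [TopologicalSpace A] (X : Set (ℤ → A)) : Prop :=
  IsClosed X ∧ ∀ (n : ℤ) (x : ℤ → A), x ∈ X → shiftZ n x ∈ X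

/-- A configuration is periodic if its orbit under the shift action is finite. -/
def IsPeriodicZ {A : Type*} (x : ℤ → A) : Prop :=
  (Set.range fun n : ℤ => shiftZ n x).Finite

/-- A subshift `X ⊆ A^ℤ` is strongly irreducible if there is a finite `Δ ⊆ ℤ` such
that whenever `Ω₁, Ω₂` are finite subsets of `ℤ` with `(Ω₁ - Δ) ∩ Ω₂ = ∅`, any two
configurations of `X` can be glued along `Ω₁` and `Ω₂` inside `X`. -/
def IsStronglyIrreducibleZ {A : Type*} (X : Set (ℤ → A)) : Prop :=
  ∃ Δ : Finset ℤ, ∀ Ω₁ Ω₂ : Finset ℤ,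
    (∀ a ∈ Ω₁, ∀ d ∈ Δ, a - d ∉ Ω₂) →
    ∀ x₁ ∈ X, ∀ x₂ ∈ X, ∃ x ∈ X,
      (∀ i ∈ Ω₁, x i = x₁ i) ∧ (∀ i ∈ Ω₂, x i = x₂ i)

/-- The word `w` appears as a subword of the configuration `x : ℤ → A`. -/
def AppearsIn {A : Type*} (w : List A) (x : ℤ → A) : Prop :=
  ∃ i : ℤ, ∀ k : Fin w.length, x (i + (k.1 : ℤ)) = w.get k

/-- The language of `X ⊆ A^ℤ`: all finite words appearing in configurations of `X`. -/
def lang {A : Type*} (X : Set (ℤ → A)) : Set (List A) :=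
  {w : List A | ∃ x ∈ X, AppearsIn w x}

/-!
Strong irreducibility glues a word `u` of `X` to a copy of itself across a gap of a fixed
length `D`; call the possible gap words `g` the fillers of `u`. Since `u h u` sits in the middle
of `(u g u) h (u g u)`, the fillers of `u g u` are among those of `u`. Extend the given window to
a word `u` with the fewest fillers and fix one filler `g`: then `u g u`, and by induction every
word `u g u g ⋯ g u` obtained by repeated doubling, has exactly the fillers of `u`, so `g`
among them. Hence every prefix of the periodic configuration `(u g)^∞` occurs in `X`, which
is closed, so `(u g)^∞ ∈ X`.
-/

section

open Set

variable {A : Type*}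

theorem shiftZ_shiftZ (a b : ℤ) (x : ℤ → A) : shiftZ a (shiftZ b x) = shiftZ (a + b) x := by
  funext m
  simp only [shiftZ, sub_sub]

theorem IsPeriodicZ.shiftZ {y : ℤ → A} (hy : IsPeriodicZ y) (m : ℤ) :
    IsPeriodicZ (shiftZ m y) :=
  hy.subset (range_subset_iff.2 fun n => ⟨n + m, (shiftZ_shiftZ n m y).symm⟩)

def periodize (P : ℤ) (w : ℤ → A) : ℤ → A := fun j => w (j % P)

theorem periodize_add_mul (P : ℤ) (w : ℤ → A) (j t : ℤ) :
    periodize P w (j + P * t) = periodize P w j := by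
  simp only [periodize, Int.add_mul_emod_self_left]

theorem periodize_of_mem_Ico {P : ℤ} (w : ℤ → A) {j : ℤ} (hj : j ∈ Ico 0 P) :
    periodize P w j = w j := by
  simp only [periodize, Int.emod_eq_of_lt hj.1 hj.2]

theorem shiftZ_periodize_emod (P : ℤ) (w : ℤ → A) (n : ℤ) :
    shiftZ (n % P) (periodize P w) = shiftZ n (periodize P w) := by
  funext j
  simp only [shiftZ, periodize, Int.sub_emod j (n % P), Int.emod_emod, ← Int.sub_emod]

theorem isPeriodicZ_periodize {P : ℤ} (hP : P ≠ 0) (w : ℤ → A) : IsPeriodicZ (periodize P w) := by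
  refine ((finite_Ico 0 (P.natAbs : ℤ)).image fun r => shiftZ r (periodize P w)).subset ?_
  rintro - ⟨n, rfl⟩
  exact ⟨n % P, ⟨Int.emod_nonneg n hP, Int.emod_lt n hP⟩, shiftZ_periodize_emod P w n⟩

theorem mem_closure_of_forall_eqOn_Icc [TopologicalSpace A] [DiscreteTopology A]
    {S : Set (ℤ → A)} {x : ℤ → A} (h : ∀ n : ℕ, ∃ y ∈ S, EqOn y x (Icc (-n) n)) :
    x ∈ closure S := by
  rw [mem_closure_iff]
  intro U hU hxU
  obtain ⟨I, u, hu, hIU⟩ := isOpen_pi_iff.1 hU x hxU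
  obtain ⟨y, hyS, hyx⟩ := h (I.sup Int.natAbs)
  refine ⟨y, hIU fun i hi => ?_, hyS⟩
  have hiI : i.natAbs ≤ I.sup Int.natAbs := Finset.le_sup (f := Int.natAbs) hi
  rw [hyx ⟨by omega, by omega⟩]
  exact (hu i hi).2

def IsAdmissible (X : Set (ℤ → A)) (z : ℤ → A) (ℓ : ℤ) : Prop :=
  ∃ w ∈ X, EqOn w z (Ico 0 ℓ)

theorem IsAdmissible.mono {X : Set (ℤ → A)} {z : ℤ → A} {ℓ ℓ' : ℤ} (h : IsAdmissible X z ℓ)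
    (hℓ : ℓ' ≤ ℓ) : IsAdmissible X z ℓ' :=
  let ⟨w, hwX, hw⟩ := h
  ⟨w, hwX, hw.mono (Ico_subset_Ico_right hℓ)⟩

theorem periodize_mem_of_forall_isAdmissible [TopologicalSpace A] [DiscreteTopology A]
    {X : Set (ℤ → A)} (hX : IsSubshiftZ X) {P : ℤ} (hP : 0 < P) {w : ℤ → A}
    (h : ∀ L, IsAdmissible X (periodize P w) L) : periodize P w ∈ X := by
  refine hX.1.closure_subset (mem_closure_of_forall_eqOn_Icc fun n => ?_)
  obtain ⟨v, hvX, hv⟩ := h (P * n + n + 1)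
  have hnP : (n : ℤ) ≤ P * n := le_mul_of_one_le_left (by positivity) hP
  refine ⟨shiftZ (-(P * n)) v, hX.2 _ v hvX, fun i ⟨hi₀, hin⟩ => ?_⟩
  rw [shiftZ, sub_neg_eq_add, hv ⟨by omega, by omega⟩, periodize_add_mul]

def GluesIntervals (X : Set (ℤ → A)) (D : ℕ) : Prop :=
  ∀ a b c d : ℤ, b + D ≤ c → ∀ x₁ ∈ X, ∀ x₂ ∈ X,
    ∃ x ∈ X, EqOn x x₁ (Ico a b) ∧ EqOn x x₂ (Ico c d)

theorem IsStronglyIrreducibleZ.exists_gluesIntervals {X : Set (ℤ → A)}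
    (h : IsStronglyIrreducibleZ X) : ∃ D, GluesIntervals X D := by
  obtain ⟨Δ, hΔ⟩ := h
  refine ⟨Δ.sup Int.natAbs, fun a b c d hbc x₁ hx₁ x₂ hx₂ => ?_⟩
  obtain ⟨x, hxX, hx₁, hx₂⟩ := hΔ (Finset.Ico a b) (Finset.Ico c d) (fun i hi e he => by
    have : e.natAbs ≤ Δ.sup Int.natAbs := Finset.le_sup (f := Int.natAbs) he
    simp only [Finset.mem_Ico] at hi ⊢
    omega) x₁ hx₁ x₂ hx₂
  exact ⟨x, hxX, fun i hi => hx₁ i (by simpa using hi), fun i hi => hx₂ i (by simpa using hi)⟩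

variable {X : Set (ℤ → A)} {D : ℕ}

/-- The words `g` of length `D` such that `z|[0, ℓ) g z|[0, ℓ)` occurs at the origin of some
configuration of `X`. -/
def fillers (X : Set (ℤ → A)) (D : ℕ) (z : ℤ → A) (ℓ : ℤ) : Set (Fin D → A) :=
  {g | ∃ w ∈ X, (∀ j ∈ Ico 0 ℓ, w j = z j ∧ w (ℓ + D + j) = z j) ∧ ∀ k : Fin D, w (ℓ + k) = g k}

theorem fillers_congr {z z' : ℤ → A} {ℓ : ℤ} (h : EqOn z z' (Ico 0 ℓ)) :
    fillers X D z ℓ = fillers X D z' ℓ := by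
  ext g
  constructor <;> rintro ⟨w, hwX, hw, hg⟩ <;> refine ⟨w, hwX, fun j hj => ?_, hg⟩
  · rw [← h hj]; exact hw j hj
  · rw [h hj]; exact hw j hj

theorem fillers_nonempty (hshift : ∀ n x, x ∈ X → shiftZ n x ∈ X) (hglue : GluesIntervals X D)
    {z : ℤ → A} {ℓ : ℤ} (hz : IsAdmissible X z ℓ) : (fillers X D z ℓ).Nonempty := by
  obtain ⟨v, hvX, hv⟩ := hz
  obtain ⟨w, hwX, hw₁, hw₂⟩ :=
    hglue 0 ℓ (ℓ + D) (ℓ + D + ℓ) le_rfl v hvX (shiftZ (ℓ + D) v) (hshift _ v hvX)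
  refine ⟨fun k => w (ℓ + k), w, hwX, fun j hj => ⟨(hw₁ hj).trans (hv hj), ?_⟩, fun k => rfl⟩
  rw [hw₂ ⟨by linarith [hj.1], by linarith [hj.2]⟩, shiftZ, add_sub_cancel_left, hv hj]

theorem fillers_subset (hshift : ∀ n x, x ∈ X → shiftZ n x ∈ X) {z : ℤ → A} {ℓ : ℤ}
    (hz : ∀ j ∈ Ico 0 ℓ, z (ℓ + D + j) = z j) :
    fillers X D z (2 * ℓ + D) ⊆ fillers X D z ℓ := by
  rintro g ⟨w, hwX, hw, hg⟩
  refine ⟨shiftZ (-(ℓ + D)) w, hshift _ w hwX, fun j ⟨hj₀, hjℓ⟩ => ⟨?_, ?_⟩, fun k => ?_⟩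
  · rw [shiftZ, sub_neg_eq_add, add_comm j, (hw _ ⟨by omega, by omega⟩).1]
    exact hz j ⟨hj₀, hjℓ⟩
  · rw [shiftZ, sub_neg_eq_add, ← (hw j ⟨hj₀, by omega⟩).2]
    ring_nf
  · rw [shiftZ, sub_neg_eq_add, ← hg k]
    ring_nf

theorem isAdmissible_of_mem_fillers {z : ℤ → A} {ℓ : ℤ} {g : Fin D → A}
    (hg : g ∈ fillers X D z ℓ) (hzg : ∀ k : Fin D, z (ℓ + k) = g k)
    (hz : ∀ j ∈ Ico 0 ℓ, z (ℓ + D + j) = z j) : IsAdmissible X z (2 * ℓ + D) := by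
  obtain ⟨w, hwX, hw, hwg⟩ := hg
  refine ⟨w, hwX, fun j ⟨hj₀, hj⟩ => ?_⟩
  rcases lt_or_ge j ℓ with hjℓ | hℓj
  · exact (hw j ⟨hj₀, hjℓ⟩).1
  rcases lt_or_ge j (ℓ + D) with hjD | hDj
  · obtain ⟨k, rfl⟩ : ∃ k : Fin D, ℓ + k = j := ⟨⟨(j - ℓ).toNat, by omega⟩, by simp only; omega⟩
    exact (hwg k).trans (hzg k).symm
  · have := (hw (j - ℓ - D) ⟨by omega, by omega⟩).2
    rwa [← hz _ ⟨by omega, by omega⟩, show ℓ + D + (j - ℓ - D) = j by ring] at this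

theorem periodize_doubling (hshift : ∀ n x, x ∈ X → shiftZ n x ∈ X) {w : ℤ → A} {ℓ : ℤ}
    (hℓ : 0 ≤ ℓ) {g : Fin D → A} (hwg : ∀ k : Fin D, w (ℓ + k) = g k) (t : ℤ)
    (hg : g ∈ fillers X D (periodize (ℓ + D) w) (ℓ + (ℓ + D) * t)) :
    IsAdmissible X (periodize (ℓ + D) w) (ℓ + (ℓ + D) * (2 * t + 1)) ∧
      fillers X D (periodize (ℓ + D) w) (ℓ + (ℓ + D) * (2 * t + 1)) ⊆
        fillers X D (periodize (ℓ + D) w) (ℓ + (ℓ + D) * t) := by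
  have hlen : 2 * (ℓ + (ℓ + D) * t) + D = ℓ + (ℓ + D) * (2 * t + 1) := by ring
  have hfill : ∀ k : Fin D, periodize (ℓ + D) w (ℓ + (ℓ + D) * t + k) = g k := fun k => by
    rw [add_right_comm, periodize_add_mul, periodize_of_mem_Ico w ⟨by omega, by omega⟩, hwg]
  have hcopy : ∀ j ∈ Ico 0 (ℓ + (ℓ + D) * t),
      periodize (ℓ + D) w (ℓ + (ℓ + D) * t + D + j) = periodize (ℓ + D) w j := fun j _ => by
    rw [show ℓ + (ℓ + D) * t + D + j = j + (ℓ + D) * (t + 1) by ring, periodize_add_mul]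
  rw [← hlen]
  exact ⟨isAdmissible_of_mem_fillers hg hfill hcopy, fillers_subset hshift hcopy⟩

theorem exists_periodic_eqOn [Finite A] [TopologicalSpace A] [DiscreteTopology A]
    (hX : IsSubshiftZ X) (hglue : GluesIntervals X D) {z₀ : ℤ → A} {ℓ₀ : ℤ}
    (hz₀ : IsAdmissible X z₀ ℓ₀) (hℓ₀ : 0 < ℓ₀) :
    ∃ y ∈ X, IsPeriodicZ y ∧ EqOn y z₀ (Ico 0 ℓ₀) := by
  obtain ⟨⟨z, ℓ⟩, ⟨hℓ, hzz₀, hz⟩, hmin⟩ :=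
    (InvImage.wf (fun p : (ℤ → A) × ℤ => (fillers X D p.1 p.2).ncard) wellFounded_lt).has_min
      {p | ℓ₀ ≤ p.2 ∧ EqOn p.1 z₀ (Ico 0 ℓ₀) ∧ IsAdmissible X p.1 p.2}
      ⟨(z₀, ℓ₀), le_rfl, eqOn_refl _ _, hz₀⟩
  dsimp only at hℓ hzz₀ hz
  obtain ⟨g, hg⟩ := fillers_nonempty hX.2 hglue hz
  obtain ⟨w, -, hw, hwg⟩ := id hg
  have hP : 0 < ℓ + D := by omega
  have hyz : EqOn (periodize (ℓ + D) w) z (Ico 0 ℓ) := fun j ⟨hj₀, hjℓ⟩ =>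
    (periodize_of_mem_Ico w ⟨hj₀, by omega⟩).trans (hw j ⟨hj₀, hjℓ⟩).1
  have hyz₀ : EqOn (periodize (ℓ + D) w) z₀ (Ico 0 ℓ₀) := fun j ⟨hj₀, hjℓ₀⟩ =>
    (hyz ⟨hj₀, by omega⟩).trans (hzz₀ ⟨hj₀, hjℓ₀⟩)
  have hstable : ∀ n : ℕ, ∃ t : ℤ, n ≤ t ∧
      fillers X D (periodize (ℓ + D) w) (ℓ + (ℓ + D) * t) = fillers X D z ℓ := by
    intro n
    induction n with
    | zero => exact ⟨0, le_rfl, by simpa using fillers_congr hyz⟩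
    | succ n ih =>
      obtain ⟨t, hnt, ht⟩ := ih
      obtain ⟨hadm, hsub⟩ := periodize_doubling hX.2 (by omega) hwg t (ht ▸ hg)
      have hlen : ℓ₀ ≤ ℓ + (ℓ + D) * (2 * t + 1) := by nlinarith
      rw [ht] at hsub
      exact ⟨2 * t + 1, by omega,
        eq_of_subset_of_ncard_le hsub (not_lt.1 (hmin (_, _) ⟨hlen, hyz₀, hadm⟩))⟩
  refine ⟨_, periodize_mem_of_forall_isAdmissible hX hP fun L => ?_, isPeriodicZ_periodize hP.ne' w, hyz₀⟩
  obtain ⟨t, hLt, ht⟩ := hstable L.toNat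
  refine (periodize_doubling hX.2 (by omega) hwg t (ht ▸ hg)).1.mono ?_
  nlinarith [Int.self_le_toNat L]

end

/-- If `A` is a finite set and `X ⊆ A^ℤ` is a strongly irreducible subshift, then the
periodic configurations of `X` are dense in `X`. -/
theorem dense_periodic_of_strongly_irreducible
    {A : Type*} [Finite A] [TopologicalSpace A] [DiscreteTopology A]
    (X : Set (ℤ → A)) (hX : IsSubshiftZ X) (hsi : IsStronglyIrreducibleZ X) :
    X ⊆ closure {x ∈ X | IsPeriodicZ x} := by
  obtain ⟨D, hD⟩ := hsi.exists_gluesIntervals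
  intro x hx
  refine mem_closure_of_forall_eqOn_Icc fun n => ?_
  obtain ⟨y, hyX, hy, hyx⟩ := exists_periodic_eqOn hX hD (z₀ := shiftZ n x) (ℓ₀ := 2 * n + 1)
    ⟨_, hX.2 _ x hx, Set.eqOn_refl _ _⟩ (by omega)
  refine ⟨shiftZ (-n) y, ⟨hX.2 _ y hyX, hy.shiftZ _⟩, fun i ⟨hi₁, hi₂⟩ => ?_⟩
  rw [shiftZ, hyx ⟨by omega, by omega⟩, shiftZ, sub_neg_eq_add, add_sub_cancel_right]
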